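/- arXiv:1510.06948 — 5 statements merged into one kernel-verified Lean document; each statement's English description precedes it below -/
import Mathlib

section
/- Let a_0, ..., a_n be integers with a_i ≤ -2, and suppose -q/p = [a_0, ..., a_n] and -v/u = [a_0, ..., a_{n-1}] as negative continued fractions, with p, q, u, v positive integers satisfying pv - qu = 1. Then (p - q)/(v - u) = [a_n, a_{n-1}, ..., a_1, a_0 + 1] as a negative continued fraction. -/
def ncf : List ℤ → ℚ
  | [] => 0
  | [a] => (a : ℚ)
  | a :: b :: l => (a : ℚ) - (ncf (b :: l))⁻¹

def cm : List ℤ → ℤ × ℤ × ℤ × ℤ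
  | [] => (1, 0, 0, 1)
  | a :: l => (a * (cm l).1 - (cm l).2.1, (cm l).1,
               a * (cm l).2.2.1 - (cm l).2.2.2, (cm l).2.2.1)

theorem cm_det : ∀ l : List ℤ, (cm l).1 * (cm l).2.2.2 - (cm l).2.2.1 * (cm l).2.1 = 1
  | [] => by simp [cm]
  | a :: l => by
    have ih := cm_det l
    simp only [cm]
    nlinarith [ih]

theorem cm_dropLast : ∀ l : List ℤ, l ≠ [] →
    (cm l).2.2.1 = -(cm l.dropLast).1 ∧ (cm l).2.2.2 = -(cm l.dropLast).2.1
  | [], h => absurd rfl h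
  | [a], _ => by simp [cm]
  | a :: b :: t, _ => by
    have ih := cm_dropLast (b :: t) (by simp)
    rw [List.dropLast_cons₂]
    constructor
    · show a * (cm (b :: t)).2.2.1 - (cm (b :: t)).2.2.2 = -(a * (cm (b :: t).dropLast).1 - (cm (b :: t).dropLast).2.1)
      rw [ih.1, ih.2]; ring
    · show (cm (b :: t)).2.2.1 = -(cm (b :: t).dropLast).1
      exact ih.1

theorem cm_concat : ∀ (s : List ℤ) (a : ℤ),
    (cm (s ++ [a])).1 = a * (cm s).1 + (cm s).2.2.1 ∧
    (cm (s ++ [a])).2.1 = a * (cm s).2.1 + (cm s).2.2.2 ∧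
    (cm (s ++ [a])).2.2.1 = -(cm s).1 ∧
    (cm (s ++ [a])).2.2.2 = -(cm s).2.1
  | [], a => by simp [cm]
  | b :: s, a => by
    have ih := cm_concat s a
    rw [List.cons_append]
    refine ⟨?_, ?_, ?_, ?_⟩
    · show b * (cm (s ++ [a])).1 - (cm (s ++ [a])).2.1 = a * (b * (cm s).1 - (cm s).2.1) + (b * (cm s).2.2.1 - (cm s).2.2.2)
      rw [ih.1, ih.2.1]; ring
    · show (cm (s ++ [a])).1 = a * (cm s).1 + (cm s).2.2.1
      exact ih.1
    · show b * (cm (s ++ [a])).2.2.1 - (cm (s ++ [a])).2.2.2 = -(b * (cm s).1 - (cm s).2.1)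
      rw [ih.2.2.1, ih.2.2.2]; ring
    · show (cm (s ++ [a])).2.2.1 = -(cm s).1
      exact ih.2.2.1

theorem cm_reverse : ∀ l : List ℤ,
    (cm l.reverse).1 = (cm l).1 ∧
    (cm l.reverse).2.1 = -(cm l).2.2.1 ∧
    (cm l.reverse).2.2.1 = -(cm l).2.1 ∧
    (cm l.reverse).2.2.2 = (cm l).2.2.2
  | [] => by simp [cm]
  | a :: l => by
    have ih := cm_reverse l
    have hc := cm_concat l.reverse a
    rw [List.reverse_cons]
    refine ⟨?_, ?_, ?_, ?_⟩
    · rw [hc.1, ih.1, ih.2.2.1]; simp only [cm]; ring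
    · rw [hc.2.1, ih.2.1, ih.2.2.2]; simp only [cm]; ring
    · rw [hc.2.2.1, ih.1]; simp only [cm]
    · rw [hc.2.2.2, ih.2.1]; simp only [cm, neg_neg]

theorem ncf_main : ∀ l : List ℤ, l ≠ [] → (∀ a ∈ l.dropLast, a ≤ -2) →
    (∀ x ∈ l.getLast?, x ≤ -1) →
    ncf l ≤ -1 ∧ ncf l = ((cm l).1 : ℚ) / ((cm l).2.1 : ℚ) ∧
      ((cm l).1 : ℚ) ≠ 0 ∧ ((cm l).2.1 : ℚ) ≠ 0
  | [], h, _, _ => absurd rfl h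
  | [a], _, _, h3 => by
    have ha : a ≤ -1 := h3 a (by simp [List.getLast?])
    have haQ : (a : ℚ) ≤ -1 := by exact_mod_cast ha
    refine ⟨by simpa [ncf] using haQ, by norm_num [ncf, cm], ?_, by norm_num [cm]⟩
    show ((cm [a]).1 : ℚ) ≠ 0
    have : (cm [a]).1 = a := by norm_num [cm]
    rw [this]
    exact_mod_cast (by omega : a ≠ 0)
  | a :: b :: t, _, h2, h3 => by
    have ha : a ≤ -2 := h2 a (by simp)
    obtain ⟨ihle, iheq, ihn, ihd⟩ := ncf_main (b :: t) (by simp)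
      (fun x hx => h2 x (by rw [List.dropLast_cons₂]; exact List.mem_cons_of_mem _ hx))
      (fun x hx => h3 x (by rwa [List.getLast?_cons_cons]))
    have hx0 : ncf (b :: t) ≠ 0 := by intro h; rw [h] at ihle; norm_num at ihle
    have hxneg : ncf (b :: t) < 0 := lt_of_le_of_lt ihle (by norm_num)
    have hinv1 : (-1 : ℚ) ≤ (ncf (b :: t))⁻¹ := by
      have h1 : ncf (b :: t) * (ncf (b :: t))⁻¹ = 1 := mul_inv_cancel₀ hx0
      nlinarith [inv_nonpos.mpr hxneg.le]
    have hinv2 : (ncf (b :: t))⁻¹ < 0 := inv_neg''.mpr hxneg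
    have haQ : (a : ℚ) ≤ -2 := by exact_mod_cast ha
    have hle : ncf (a :: b :: t) ≤ -1 := by
      show (a : ℚ) - (ncf (b :: t))⁻¹ ≤ -1
      linarith
    have heq : ncf (a :: b :: t) =
        ((cm (a :: b :: t)).1 : ℚ) / ((cm (a :: b :: t)).2.1 : ℚ) := by
      show (a : ℚ) - (ncf (b :: t))⁻¹ =
        ((a * (cm (b :: t)).1 - (cm (b :: t)).2.1 : ℤ) : ℚ) / (((cm (b :: t)).1 : ℤ) : ℚ)
      rw [iheq, inv_div]
      push_cast
      field_simp
    refine ⟨hle, heq, ?_, ?_⟩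
    · intro h0
      rw [heq, h0, zero_div] at hle
      norm_num at hle
    · show (((cm (b :: t)).1 : ℤ) : ℚ) ≠ 0
      exact ihn

theorem key (p q u v a1 a2 b1 b2 c1 c2 : ℤ)
    (hp : 0 < p) (hu : 0 < u)
    (hdet : p * v - q * u = 1)
    (hdetL : b1 * a2 - a1 * b2 = 1)
    (hcopB : IsCoprime b1 b2)
    (hC1 : c1 = a1 + a2) (hC2 : c2 = b1 + b2)
    (ha2 : (a2 : ℚ) ≠ 0) (hb2 : (b2 : ℚ) ≠ 0)
    (h1 : (a1 : ℚ) / a2 = -(q : ℚ) / p) (h2 : (b1 : ℚ) / b2 = -(v : ℚ) / u) :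
    (c1 : ℚ) / c2 = ((p : ℚ) - q) / ((v : ℚ) - u) := by
  have hpz : (p : ℚ) ≠ 0 := by positivity
  have huz : (u : ℚ) ≠ 0 := by positivity
  have hcross1 : a1 * p = -q * a2 := by
    rw [div_eq_div_iff ha2 hpz] at h1
    exact_mod_cast h1
  have hcross2 : b1 * u = -v * b2 := by
    rw [div_eq_div_iff hb2 huz] at h2
    exact_mod_cast h2
  have hcopA : IsCoprime a1 a2 := ⟨-b2, b1, by linear_combination hdetL⟩
  have hcoppq : IsCoprime p q := ⟨v, -u, by linear_combination hdet⟩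
  have hcopuv : IsCoprime u v := ⟨-q, p, by linear_combination hdet⟩
  have hpd : p ∣ a2 := hcoppq.dvd_of_dvd_mul_left ⟨-a1, by linear_combination hcross1⟩
  obtain ⟨lam, hlam⟩ := hpd
  have hA1e : a1 = -(q * lam) := by
    apply mul_right_cancel₀ hp.ne'
    rw [hcross1, hlam]; ring
  have hlamu : IsUnit lam :=
    hcopA.isUnit_of_dvd' ⟨-q, by rw [hA1e]; ring⟩ ⟨p, by rw [hlam]; ring⟩
  have hud : u ∣ b2 := hcopuv.dvd_of_dvd_mul_left ⟨-b1, by linear_combination hcross2⟩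
  obtain ⟨mu, hmu⟩ := hud
  have hB1e : b1 = -(v * mu) := by
    apply mul_right_cancel₀ hu.ne'
    rw [hcross2, hmu]; ring
  have hmuu : IsUnit mu :=
    hcopB.isUnit_of_dvd' ⟨-v, by rw [hB1e]; ring⟩ ⟨u, by rw [hmu]; ring⟩
  rw [Int.isUnit_iff] at hlamu hmuu
  have hlm : lam * mu = -1 := by
    rw [hA1e, hlam, hB1e, hmu] at hdetL
    nlinarith [hdetL, hdet]
  have hmue : mu = -lam := by
    rcases hlamu with h | h <;> rcases hmuu with h' | h' <;>
      rw [h, h'] at hlm ⊢ <;> omega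
  have hlamz : (lam : ℚ) ≠ 0 := by
    rcases hlamu with h | h <;> simp [h]
  have e1 : (c1 : ℚ) = (lam : ℚ) * ((p : ℚ) - q) := by
    rw [hC1, hA1e, hlam]; push_cast; ring
  have e2 : (c2 : ℚ) = (lam : ℚ) * ((v : ℚ) - u) := by
    rw [hC2, hB1e, hmu, hmue]; push_cast; ring
  rw [e1, e2, mul_div_mul_left _ _ hlamz]

theorem stmt_2 (L : List ℤ) (a₀ : ℤ) (T : List ℤ) (hLT : L = a₀ :: T) (hT : T ≠ [])
    (hL : ∀ a ∈ L, a ≤ -2)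
    (p q u v : ℤ) (hp : 0 < p) (hq : 0 < q) (hu : 0 < u) (hv : 0 < v)
    (hdet : p * v - q * u = 1)
    (h1 : ncf L = -(q : ℚ) / p) (h2 : ncf L.dropLast = -(v : ℚ) / u) :
    ncf (T.reverse ++ [a₀ + 1]) = ((p : ℚ) - q) / ((v : ℚ) - u) := by
  subst hLT
  obtain ⟨b, t, rfl⟩ := List.exists_cons_of_ne_nil hT
  have hmem_last : ∀ (l : List ℤ), (∀ a ∈ l, a ≤ -2) → ∀ x ∈ l.getLast?, x ≤ -1 := by
    intro l hl x hx
    obtain ⟨h, rfl⟩ := List.mem_getLast?_eq_getLast hx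
    have := hl _ (List.getLast_mem h); omega
  obtain ⟨_, hLeq, hLn, hLd⟩ := ncf_main (a₀ :: b :: t) (by simp)
    (fun a ha => hL a ((List.dropLast_sublist _).subset ha))
    (hmem_last _ hL)
  have hL'sub : ∀ a ∈ (a₀ :: b :: t).dropLast, a ≤ -2 :=
    fun a ha => hL a ((List.dropLast_sublist _).subset ha)
  obtain ⟨_, hL'eq, hL'n, hL'd⟩ := ncf_main ((a₀ :: b :: t).dropLast)
    (by rw [List.dropLast_cons₂]; simp)
    (fun a ha => hL'sub a ((List.dropLast_sublist _).subset ha))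
    (hmem_last _ hL'sub)
  obtain ⟨_, hteq, htn, htd⟩ := ncf_main ((b :: t).reverse ++ [a₀ + 1]) (by simp)
    (by
      rw [List.dropLast_concat]
      intro a ha
      exact hL a (List.mem_cons_of_mem _ (List.mem_reverse.mp ha)))
    (by
      intro x hx
      rw [List.getLast?_concat] at hx
      simp only [Option.mem_some_iff] at hx
      have : a₀ ≤ -2 := hL a₀ (by simp)
      omega)
  have hdl := cm_dropLast (a₀ :: b :: t) (by simp)
  have hcc := cm_concat (b :: t).reverse (a₀ + 1)
  have hrev := cm_reverse (b :: t)
  have hx : (cm (a₀ :: b :: t)).2.2.1 = a₀ * (cm (b :: t)).2.2.1 - (cm (b :: t)).2.2.2 := rfl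
  have hy : (cm (a₀ :: b :: t)).2.2.2 = (cm (b :: t)).2.2.1 := rfl
  have e1 : (cm (a₀ :: b :: t).dropLast).1
      = -(a₀ * (cm (b :: t)).2.2.1 - (cm (b :: t)).2.2.2) := by
    have h := hdl.1
    rw [hx] at h
    linarith
  have e2 : (cm (a₀ :: b :: t).dropLast).2.1 = -(cm (b :: t)).2.2.1 := by
    have h := hdl.2
    rw [hy] at h
    linarith
  have hC1 : (cm ((b :: t).reverse ++ [a₀ + 1])).1
      = (cm (a₀ :: b :: t)).1 + (cm (a₀ :: b :: t)).2.1 := by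
    rw [hcc.1, hrev.1, hrev.2.2.1]
    simp only [cm]
    ring
  have hC2 : (cm ((b :: t).reverse ++ [a₀ + 1])).2.1
      = (cm (a₀ :: b :: t).dropLast).1 + (cm (a₀ :: b :: t).dropLast).2.1 := by
    rw [hcc.2.1, hrev.2.1, hrev.2.2.2, e1, e2]
    ring
  have hdetL : (cm (a₀ :: b :: t).dropLast).1 * (cm (a₀ :: b :: t)).2.1
      - (cm (a₀ :: b :: t)).1 * (cm (a₀ :: b :: t).dropLast).2.1 = 1 := by
    have hd := cm_det (a₀ :: b :: t)
    rw [hdl.1, hdl.2] at hd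
    linear_combination hd
  have hcopB : IsCoprime (cm (a₀ :: b :: t).dropLast).1 (cm (a₀ :: b :: t).dropLast).2.1 :=
    ⟨(cm (a₀ :: b :: t).dropLast).2.2.2, -(cm (a₀ :: b :: t).dropLast).2.2.1, by
      linear_combination cm_det (a₀ :: b :: t).dropLast⟩
  rw [hteq]
  exact key p q u v _ _ _ _ _ _ hp hu hdet hdetL hcopB hC1 hC2 hLd hL'd
    (by rw [← hLeq]; exact h1) (by rw [← hL'eq]; exact h2)
end

section
/- Let p, q, u, v, n be integers with pv - qu = 1, 0 < p < q, 0 < u ≤ p, 0 < v ≤ q, and n < 0. Then 0 ≤ ((q-p)·n + (v-u))/(q·n + v) < (q-p)/q. -/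
theorem stmt_5 (p q u v n : ℤ) (hdet : p * v - q * u = 1)
    (hp : 0 < p) (hpq : p < q) (hu : 0 < u) (hup : u ≤ p) (hv : 0 < v) (hvq : v ≤ q)
    (hn : n < 0) :
    0 ≤ (((q : ℚ) - p) * n + ((v : ℚ) - u)) / ((q : ℚ) * n + v) ∧
    (((q : ℚ) - p) * n + ((v : ℚ) - u)) / ((q : ℚ) * n + v) < ((q : ℚ) - p) / q := by
  -- v < q
  have hvq' : v < q := by
    rcases lt_or_eq_of_le hvq with h | h
    · exact h
    · exfalso
      subst h
      have h1 : v * (p - u) = 1 := by ring_nf; linarith [hdet]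
      have h2 : 0 ≤ p - u := by omega
      rcases eq_or_lt_of_le h2 with h3 | h3
      · rw [← h3] at h1; simp at h1
      · nlinarith [mul_le_mul_of_nonneg_left (by omega : 1 ≤ p - u) hv.le]
  -- a ≤ b, i.e. p - u ≤ q - v
  have hab : p - u ≤ q - v := by
    by_contra h
    push_neg at h
    have h1 : q * (p - u) - p * (q - v) = 1 := by linarith [hdet, mul_comm p v]; 
    nlinarith [mul_le_mul_of_nonneg_left (by omega : q - v + 1 ≤ p - u) (le_of_lt (lt_trans hp hpq))]
  have hNz : (q - p) * n + (v - u) ≤ 0 := by nlinarith [mul_le_mul_of_nonneg_left (by omega : n ≤ -1) (by omega : (0:ℤ) ≤ q - p)]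
  have hDz : q * n + v < 0 := by nlinarith [mul_le_mul_of_nonneg_left (by omega : n ≤ -1) (by omega : (0:ℤ) ≤ q)]
  have hN : ((q : ℚ) - p) * n + ((v : ℚ) - u) ≤ 0 := by exact_mod_cast hNz
  have hD : (q : ℚ) * n + v < 0 := by exact_mod_cast hDz
  have hq : (0:ℚ) < q := by exact_mod_cast lt_trans hp hpq
  have hdetQ : (p:ℚ) * v - q * u = 1 := by exact_mod_cast hdet
  constructor
  · exact div_nonneg_of_nonpos hN hD.le
  · rw [← neg_div_neg_eq, div_lt_div_iff₀ (by linarith) hq]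
    nlinarith
end

section
/- Let p, q, u, v be positive integers with pv - qu = 1, 4/5 ≤ p/q < 5/6, u ≤ p, v ≤ q, and q - p ≥ v - u. Then for every integer n < 0, the inequality ((6p-5q)·n + 3p - 2q)/((5v-6u)·n + 2v - 3u) < (6p - 5q)/(5v - 6u) holds. -/
theorem stmt_8 (p q u v : ℤ) (hp : 0 < p) (hq : 0 < q) (hu : 0 < u) (hv : 0 < v)
    (hdet : p * v - q * u = 1)
    (hlow : (4 : ℚ) / 5 ≤ (p : ℚ) / q) (hhigh : (p : ℚ) / q < 5 / 6)
    (hup : u ≤ p) (hvq : v ≤ q) (hqp : v - u ≤ q - p) :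
    ∀ n : ℤ, n < 0 →
      ((5 * (v : ℚ) - 6 * u) * n + 2 * v - 3 * u) ≠ 0 ∧
      (5 * (v : ℚ) - 6 * u) ≠ 0 ∧
      ((6 * (p : ℚ) - 5 * q) * n + 3 * p - 2 * q) / ((5 * (v : ℚ) - 6 * u) * n + 2 * v - 3 * u)
        < (6 * (p : ℚ) - 5 * q) / (5 * (v : ℚ) - 6 * u) := by
  intro n hn
  have hqQ : (0:ℚ) < (q:ℚ) := by exact_mod_cast hq
  have h2Q : 6 * (p:ℚ) < 5 * q := by
    rw [div_lt_div_iff₀ hqQ (by norm_num : (0:ℚ) < 6)] at hhigh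
    linarith
  have h2 : 6 * p < 5 * q := by exact_mod_cast h2Q
  -- 5v - 6u > 0 in ℤ
  have hB : 0 < 5 * v - 6 * u := by nlinarith [mul_pos hu hq, mul_pos hp hv]
  -- u < v
  have huv : u < v := by nlinarith [mul_pos hp hu]
  have hn1 : n ≤ -1 := by omega
  -- denominator negative in ℤ
  have hD : (5 * v - 6 * u) * n + 2 * v - 3 * u < 0 := by nlinarith
  -- cast to ℚ
  have hBQ : (0:ℚ) < 5 * (v:ℚ) - 6 * u := by exact_mod_cast hB
  have hDQ : (5 * (v:ℚ) - 6 * u) * n + 2 * v - 3 * u < 0 := by exact_mod_cast hD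
  refine ⟨ne_of_lt hDQ, ne_of_gt hBQ, ?_⟩
  have hdetQ : (p:ℚ) * v - q * u = 1 := by exact_mod_cast hdet
  have key : ((6 * (p : ℚ) - 5 * q) * n + 3 * p - 2 * q) / ((5 * (v : ℚ) - 6 * u) * n + 2 * v - 3 * u)
      - (6 * (p : ℚ) - 5 * q) / (5 * (v : ℚ) - 6 * u)
      = 3 / (((5 * (v : ℚ) - 6 * u) * n + 2 * v - 3 * u) * (5 * (v : ℚ) - 6 * u)) := by
    rw [div_sub_div _ _ hDQ.ne hBQ.ne']
    congr 1
    linear_combination 3 * hdetQ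
  have hneg : (3:ℚ) / (((5 * (v : ℚ) - 6 * u) * n + 2 * v - 3 * u) * (5 * (v : ℚ) - 6 * u)) < 0 :=
    div_neg_of_pos_of_neg (by norm_num) (mul_neg_of_neg_of_pos hDQ hBQ)
  linarith
end

section
/- Let p1, q1, p2, q2, p3, q3, u3, v3 be positive integers with p_i < q_i, p3·v3 - q3·u3 = 1, u3 ≤ p3, v3 ≤ q3. Set A = p1/q1 + p2/q2 + p3/q3 - 2 and C = 2 - p1/q1 - p2/q2 - u3/v3. If p1/q1 + p2/q2 ≤ 1, or if A > 0 and C < 0, then (A·q3)/(C·v3) ≤ (p3 - q3)/(v3 - u3). -/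
/-!
Put `t = 2 - p₁/q₁ - p₂/q₂`, so that `A q₃ = p₃ - t q₃` and `C v₃ = t v₃ - u₃`. Since
`p₃ v₃ - q₃ u₃ = 1`, cross-multiplying the two fractions leaves exactly
`(p₃ - q₃)(t v₃ - u₃) - (p₃ - t q₃)(v₃ - u₃) = t - 1`.
Moreover `v₃ > u₃`, so the inequality reduces to a sign check: if `p₁/q₁ + p₂/q₂ ≤ 1` then
`t ≥ 1` and `C > 0`; if `C < 0` then `t < u₃/v₃ < 1`.
-/

section DetOne

variable {K : Type*} [Field K] [LinearOrder K] [IsStrictOrderedRing K] {p q u v : K}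

theorem lt_of_mul_sub_mul_eq_one (hp : 0 < p) (hpq : p ≤ q) (hu : 0 ≤ u)
    (h : p * v - q * u = 1) : u < v := by
  nlinarith [mul_le_mul_of_nonneg_right hpq hu]

theorem sub_mul_sub_sub_sub_mul_sub_eq (t : K) (h : p * v - q * u = 1) :
    (p - q) * (t * v - u) - (p - t * q) * (v - u) = t - 1 := by
  linear_combination (t - 1) * h

theorem div_le_div_of_mul_sub_mul_eq_one {t : K} (hp : 0 < p) (hpq : p ≤ q) (hu : 0 ≤ u)
    (h : p * v - q * u = 1) (ht : 1 ≤ t ∨ t < u / v) :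
    (p - t * q) / (t * v - u) ≤ (p - q) / (v - u) := by
  have huv := lt_of_mul_sub_mul_eq_one hp hpq hu h
  have hv : 0 < v := hu.trans_lt huv
  have hW : 0 < v - u := sub_pos.mpr huv
  have key := sub_mul_sub_sub_sub_mul_sub_eq t h
  rcases ht with ht | ht
  · have hD : 0 < t * v - u := by nlinarith
    rw [div_le_div_iff₀ hD hW]
    linarith
  · have htv : t * v < u := (lt_div_iff₀ hv).mp ht
    have ht1 : t < 1 := ht.trans ((div_lt_one hv).mpr huv)
    rw [← neg_div_neg_eq, div_le_div_iff₀ (by linarith) hW]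
    linarith

end DetOne

theorem stmt_9_general (p1 q1 p2 q2 p3 q3 u3 v3 : ℤ)
    (hp3 : 0 < p3) (hu3 : 0 < u3) (h3 : p3 < q3) (hdet : p3 * v3 - q3 * u3 = 1)
    (A C : ℚ)
    (hA : A = (p1 : ℚ) / q1 + (p2 : ℚ) / q2 + (p3 : ℚ) / q3 - 2)
    (hC : C = 2 - (p1 : ℚ) / q1 - (p2 : ℚ) / q2 - (u3 : ℚ) / v3)
    (hcase : (p1 : ℚ) / q1 + (p2 : ℚ) / q2 ≤ 1 ∨ (0 < A ∧ C < 0)) :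
    (A * q3) / (C * v3) ≤ ((p3 : ℚ) - q3) / ((v3 : ℚ) - u3) := by
  set t : ℚ := 2 - (p1 : ℚ) / q1 - (p2 : ℚ) / q2
  have hp : (0 : ℚ) < p3 := by exact_mod_cast hp3
  have hpq : (p3 : ℚ) ≤ q3 := by exact_mod_cast h3.le
  have hu : (0 : ℚ) ≤ u3 := by exact_mod_cast hu3.le
  have hdetQ : (p3 : ℚ) * v3 - q3 * u3 = 1 := by exact_mod_cast hdet
  have hq : (q3 : ℚ) ≠ 0 := (hp.trans_le hpq).ne'
  have hv : (v3 : ℚ) ≠ 0 := (hu.trans_lt (lt_of_mul_sub_mul_eq_one hp hpq hu hdetQ)).ne'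
  have hAq : A * q3 = p3 - t * q3 := by rw [hA]; field_simp; ring
  have hCv : C * v3 = t * v3 - u3 := by rw [hC]; field_simp
  rw [hAq, hCv]
  refine div_le_div_of_mul_sub_mul_eq_one hp hpq hu hdetQ ?_
  rcases hcase with hs | ⟨-, hC0⟩
  · left; linarith
  · right; linarith

theorem stmt_9 (p1 q1 p2 q2 p3 q3 u3 v3 : ℤ)
    (hp1 : 0 < p1) (hq1 : 0 < q1) (hp2 : 0 < p2) (hq2 : 0 < q2)
    (hp3 : 0 < p3) (hq3 : 0 < q3) (hu3 : 0 < u3) (hv3 : 0 < v3)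
    (h1 : p1 < q1) (h2 : p2 < q2) (h3 : p3 < q3)
    (hdet : p3 * v3 - q3 * u3 = 1) (hup : u3 ≤ p3) (hvq : v3 ≤ q3)
    (A C : ℚ)
    (hA : A = (p1 : ℚ) / q1 + (p2 : ℚ) / q2 + (p3 : ℚ) / q3 - 2)
    (hC : C = 2 - (p1 : ℚ) / q1 - (p2 : ℚ) / q2 - (u3 : ℚ) / v3)
    (hCne : C ≠ 0) (hvu : v3 ≠ u3)
    (hcase : (p1 : ℚ) / q1 + (p2 : ℚ) / q2 ≤ 1 ∨ (0 < A ∧ C < 0)) :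
    (A * q3) / (C * v3) ≤ ((p3 : ℚ) - q3) / ((v3 : ℚ) - u3) :=
  stmt_9_general p1 q1 p2 q2 p3 q3 u3 v3 hp3 hu3 h3 hdet A C hA hC hcase
end

section
/- Let n ≥ 2. The negative continued fraction [-2, -2, -2, -2, -3, -2, ..., -2], consisting of four entries -2, then one entry -3, then (n-2) entries -2, equals -(6n-1)/(5n-1). -/
theorem ncf_cons {a : ℤ} {l : List ℤ} (hl : l ≠ []) : ncf (a :: l) = a - (ncf l)⁻¹ := by
  obtain ⟨b, l, rfl⟩ := List.exists_cons_of_ne_nil hl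
  rfl

theorem ncf_replicate_neg_two_append (j : ℕ) {l : List ℤ} (hl : l ≠ []) {q d : ℚ}
    (hq : 0 < q) (hd : 0 ≤ d) (h : ncf l = -((q + d) / q)) :
    ncf (List.replicate j (-2) ++ l) = -((q + (j + 1) * d) / (q + j * d)) := by
  induction j with
  | zero => simpa using h
  | succ j ih =>
    have hpos : 0 < q + (j + 1) * d := by positivity
    rw [List.replicate_succ, List.cons_append, ncf_cons (by simp [hl]), ih]
    push_cast
    field_simp
    ring

theorem ncf_replicate_neg_two (m : ℕ) :
    ncf (List.replicate (m + 1) (-2)) = -((m + 2) / (m + 1)) := by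
  rw [List.replicate_succ', ncf_replicate_neg_two_append m (List.cons_ne_nil _ _) one_pos
    zero_le_one (by norm_num [ncf])]
  ring_nf

theorem ncf_neg_three_cons_replicate_neg_two (k : ℕ) :
    ncf (-3 :: List.replicate k (-2)) = -((2 * k + 3) / (k + 1)) := by
  cases k with
  | zero => norm_num [ncf]
  | succ k =>
    rw [ncf_cons (by simp), ncf_replicate_neg_two]
    push_cast
    field_simp
    ring

theorem stmt_13 (n : ℕ) (hn : 2 ≤ n) :
    ncf (List.replicate 4 (-2) ++ [-3] ++ List.replicate (n - 2) (-2)) =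
      -((6 * (n : ℚ) - 1) / (5 * (n : ℚ) - 1)) := by
  have hn' : (2 : ℚ) ≤ n := by exact_mod_cast hn
  have htail : ncf (-3 :: List.replicate (n - 2) (-2)) = -((n - 1 + n) / (n - 1)) := by
    rw [ncf_neg_three_cons_replicate_neg_two, Nat.cast_sub hn]
    ring_nf
  rw [List.append_assoc, List.singleton_append,
    ncf_replicate_neg_two_append 4 (List.cons_ne_nil _ _) (by linarith) (by linarith) htail]
  ring_nf
end
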